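/- arXiv:2207.04610 — 4 statements merged into one kernel-verified Lean document; each statement's English description precedes it below -/
import Mathlib

section
/- Let v₁, v₂, v₃, v₄ ∈ (0,1) be rational numbers, and for each integer n define α_n := Σ_{i=1}^{4} (1 + n·v_i - ⌈n·v_i⌉). Suppose α_n ≥ α_1 for every integer n. Then α_1 does not lie in the open interval (2 - 1/6, 2) = (11/6, 2). -/
/-!
Put `x i = 1 - v i`, so that `α n = 4 - ∑ i, fract (n * x i)` and the hypothesis reads
`∑ i, fract (n * x i) ≤ S := ∑ i, x i` for all `n`. When no `n * x i` is an integer, the same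
bound at `-n` gives `4 - S ≤ ∑ i, fract (n * x i)`, so for `2 < S < 13/6` the sum is confined to
a window of width `2S - 4 < 1/3`. For `n = 2` and `n = 3` the window contains no admissible
value, which forces `x i₀ = 1/2` and `x i₁ ∈ {1/3, 2/3}`. These two coordinates are fixed by
every `n ≡ 1 [ZMOD 6]`, so for all such `n` avoiding the denominators of the other two
coordinates, `fract (n * T)`, with `T` their sum, lies in a fixed arc of length `< 1/3`. Over a
full period this is impossible: as `6T ∉ ℤ`, the values `fract (n * T)` run evenly through
`D = den (6T) ≥ 2` points, fewer than `D/3 + 1` of which lie on the arc, while each excluded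
denominator is prime to `6`, hence at least `5`, and removes at most a fifth of the `n`.
-/

open Finset

theorem Rat.den_dvd_of_intCast_mul_eq {q : ℚ} {n z : ℤ} (h : n * q = z) : (q.den : ℤ) ∣ n := by
  have hnum : n * q.num = z * q.den := by
    have := congrArg (· * (q.den : ℚ)) h
    simp only [mul_assoc, Rat.mul_den_eq_num] at this
    exact_mod_cast this
  have hcop : IsCoprime (q.den : ℤ) q.num := by
    rw [Int.isCoprime_iff_gcd_eq_one]
    exact q.reduced.symm
  exact hcop.dvd_of_dvd_mul_right ⟨z, by rw [hnum, mul_comm]⟩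

theorem Rat.two_le_den_of_fract_ne_zero {q : ℚ} (h : Int.fract q ≠ 0) : 2 ≤ q.den := by
  have hden : q.den ≠ 1 := fun h1 => h <| by
    rw [← (Rat.den_eq_one_iff q).1 h1, Int.fract_intCast]
  have := q.den_pos
  omega

theorem card_le_div_of_modEq {s : Finset ℕ} {N f : ℕ} (hf : f ∣ N) (hs : s ⊆ range N)
    (hmod : ∀ x ∈ s, ∀ y ∈ s, x ≡ y [MOD f]) : #s ≤ N / f := by
  calc #s ≤ #(range (N / f)) := card_le_card_of_injOn (· / f) ?_ ?_
    _ = N / f := card_range _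
  · intro x hx
    simpa using Nat.div_lt_div_of_lt_of_dvd hf (mem_range.1 (hs hx))
  · intro x hx y hy hxy
    rw [← Nat.div_add_mod x f, ← Nat.div_add_mod y f, hmod x hx y hy]
    simp only at hxy
    rw [hxy]

theorem five_mul_card_filter_dvd_one_add_six_mul_le {e N : ℕ} (he : 2 ≤ e) (heN : e ∣ N) :
    5 * #{k ∈ range N | e ∣ 1 + 6 * k} ≤ N := by
  obtain hs | ⟨k₀, hk₀⟩ := Finset.eq_empty_or_nonempty {k ∈ range N | e ∣ 1 + 6 * k}
  · simp [hs]
  have hcop : Nat.Coprime e 6 :=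
    Nat.Coprime.coprime_dvd_left (mem_filter.1 hk₀).2 (by simp)
  have he5 : 5 ≤ e := by
    by_contra! he5
    interval_cases e <;> norm_num at hcop
  have hcard : #{k ∈ range N | e ∣ 1 + 6 * k} ≤ N / e := by
    refine card_le_div_of_modEq heN (filter_subset _ _) fun x hx y hy => ?_
    have hxy : 1 + 6 * x ≡ 1 + 6 * y [MOD e] :=
      (Nat.modEq_zero_iff_dvd.2 (mem_filter.1 hx).2).trans
        (Nat.modEq_zero_iff_dvd.2 (mem_filter.1 hy).2).symm
    exact (hxy.add_left_cancel' 1).cancel_left_of_coprime hcop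
  calc 5 * #{k ∈ range N | e ∣ 1 + 6 * k} ≤ e * (N / e) := Nat.mul_le_mul he5 hcard
    _ = N := Nat.mul_div_cancel' heN

theorem den_mul_card_filter_fract_le {q c w : ℚ} {m N : ℕ} (hN : q.den ∣ N)
    (hm : q.den * w < m) :
    q.den * #{k ∈ range N | Int.fract (((k : ℕ) : ℚ) * q + c) ≤ w} ≤ m * N := by
  set D := q.den
  set s := {k ∈ range N | Int.fract (((k : ℕ) : ℚ) * q + c) ≤ w}
  -- `D * fract (k * q + c)` is `D * c` modulo `1`, so its floor determines `fract (k * q + c)`,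
  -- which in turn determines `k` modulo `D`.
  have hshift : ∀ k : ℕ, Int.fract (D * Int.fract (k * q + c)) = Int.fract (D * c) := by
    intro k
    rw [Int.fract_eq_fract]
    refine ⟨k * q.num - D * ⌊k * q + c⌋, ?_⟩
    rw [Int.fract]
    push_cast
    rw [← Rat.den_mul_eq_num]
    ring
  set φ : ℕ → ℤ := fun k => ⌊D * Int.fract (k * q + c)⌋
  have hmaps : ∀ k ∈ s, φ k ∈ Ico (0 : ℤ) m := by
    intro k hk
    rw [mem_Ico, Int.floor_nonneg, Int.floor_lt]
    refine ⟨by positivity, lt_of_le_of_lt ?_ hm⟩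
    exact mul_le_mul_of_nonneg_left (mem_filter.1 hk).2 (by positivity)
  have hfibre : ∀ j ∈ Ico (0 : ℤ) m, #{k ∈ s | φ k = j} ≤ N / D := by
    intro j _
    refine card_le_div_of_modEq hN (fun k hk => (mem_filter.1 (mem_filter.1 hk).1).1) ?_
    intro x hx y hy
    have hφ : φ x = φ y := (mem_filter.1 hx).2.trans (mem_filter.1 hy).2.symm
    have hD : (D : ℚ) ≠ 0 := by positivity
    have hfract : Int.fract (x * q + c) = Int.fract (y * q + c) := by
      apply mul_left_cancel₀ hD
      rw [← Int.floor_add_fract (D * Int.fract (x * q + c)),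
        ← Int.floor_add_fract (D * Int.fract (y * q + c)), hshift, hshift]
      exact congrArg (fun z : ℤ => (z : ℚ) + Int.fract (D * c)) hφ
    obtain ⟨z, hz⟩ := Int.fract_eq_fract.1 hfract
    rw [Nat.modEq_iff_dvd]
    exact Rat.den_dvd_of_intCast_mul_eq (z := -z) (by push_cast; linear_combination -hz)
  calc D * #s ≤ D * (N / D * #(Ico (0 : ℤ) m)) :=
        Nat.mul_le_mul_left _ (card_le_mul_card_image_of_maps_to hmaps _ hfibre)
    _ = m * N := by
        rw [Int.card_Ico, sub_zero, Int.toNat_natCast, ← mul_assoc, Nat.mul_div_cancel' hN,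
          mul_comm]

theorem exists_forall_not_dvd_and_lt_fract {ι : Type*} (R : Finset ι) (hR : #R ≤ 2) (e : ι → ℕ)
    (he : ∀ i ∈ R, 2 ≤ e i) (T l w : ℚ) (hT : Int.fract (6 * T) ≠ 0) (hw : w < 1 / 3) :
    ∃ k : ℕ, (∀ i ∈ R, ¬ e i ∣ 1 + 6 * k) ∧ w < Int.fract ((1 + 6 * k) * T - l) := by
  by_contra! H
  set D := (6 * T).den
  have hD : 2 ≤ D := Rat.two_le_den_of_fract_ne_zero hT
  set N := D * ∏ i ∈ R, e i
  have hN : 0 < N := Nat.mul_pos (by omega) (prod_pos fun i hi => by linarith [he i hi])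
  set m := ⌈(D : ℚ) / 3⌉₊
  set Z := {k ∈ range N | Int.fract (((k : ℕ) : ℚ) * (6 * T) + (T - l)) ≤ w}
  set A := fun i => {k ∈ range N | e i ∣ 1 + 6 * k}
  have hZ : D * #Z ≤ m * N := by
    refine den_mul_card_filter_fract_le (dvd_mul_right _ _) ?_
    calc (D : ℚ) * w < D / 3 := by nlinarith [(by positivity : (0 : ℚ) < D)]
      _ ≤ m := Nat.le_ceil _
  have hA : 5 * ∑ i ∈ R, #(A i) ≤ 2 * N := by
    calc 5 * ∑ i ∈ R, #(A i) ≤ ∑ i ∈ R, N := by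
          rw [mul_sum]
          exact sum_le_sum fun i hi => five_mul_card_filter_dvd_one_add_six_mul_le (he i hi)
            (dvd_mul_of_dvd_right (dvd_prod_of_mem e hi) D)
      _ ≤ 2 * N := by rw [sum_const, smul_eq_mul]; exact Nat.mul_le_mul_right N hR
  have hcover : range N ⊆ Z ∪ R.biUnion A := by
    intro k hk
    by_cases hdvd : ∃ i ∈ R, e i ∣ 1 + 6 * k
    · obtain ⟨i, hi, hki⟩ := hdvd
      exact mem_union_right _ (mem_biUnion.2 ⟨i, hi, mem_filter.2 ⟨hk, hki⟩⟩)
    · push Not at hdvd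
      refine mem_union_left _ (mem_filter.2 ⟨hk, ?_⟩)
      rw [show (k : ℚ) * (6 * T) + (T - l) = (1 + 6 * k) * T - l by ring]
      exact H k hdvd
  have hcount : N ≤ #Z + ∑ i ∈ R, #(A i) :=
    calc N = #(range N) := (card_range N).symm
      _ ≤ #(Z ∪ R.biUnion A) := card_le_card hcover
      _ ≤ #Z + ∑ i ∈ R, #(A i) := (card_union_le _ _).trans (by gcongr; exact card_biUnion_le)
  have hm : 3 * m < D + 3 := by
    have := Nat.ceil_lt_add_one (by positivity : (0 : ℚ) ≤ D / 3)
    have : (3 * m : ℚ) < D + 3 := by linarith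
    exact_mod_cast this
  have : 3 * D * N ≤ 5 * m * N := by
    nlinarith [Nat.mul_le_mul_left D hcount, Nat.mul_le_mul_left D hA]
  have := Nat.le_of_mul_le_mul_right this hN
  omega

theorem card_sub_sum_le_sum_fract_mul {ι : Type*} [Fintype ι] {x : ι → ℚ}
    (h : ∀ n : ℤ, ∑ i, Int.fract (n * x i) ≤ ∑ i, x i) {n : ℤ}
    (hn : ∀ i, Int.fract (n * x i) ≠ 0) :
    Fintype.card ι - ∑ i, x i ≤ ∑ i, Int.fract (n * x i) := by
  have hneg : ∀ i, Int.fract (((-n : ℤ) : ℚ) * x i) = 1 - Int.fract (n * x i) := fun i => by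
    rw [Int.cast_neg, neg_mul, Int.fract_neg (hn i)]
  have := h (-n)
  simp only [hneg, sum_sub_distrib, sum_const, card_univ, nsmul_eq_mul, mul_one] at this
  linarith

theorem exists_int_mem_Icc_of_forall_fract_mul_ne_zero {ι : Type*} [Fintype ι] {x : ι → ℚ}
    (h : ∀ n : ℤ, ∑ i, Int.fract (n * x i) ≤ ∑ i, x i) {q : ℤ}
    (hq : ∀ i, Int.fract (q * x i) ≠ 0) :
    ∃ m : ℤ, (q - 1) * ∑ i, x i ≤ m ∧ m ≤ (q + 1) * ∑ i, x i - Fintype.card ι := by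
  have hsum : ∑ i, Int.fract (q * x i) = q * ∑ i, x i - ((∑ i, ⌊q * x i⌋ : ℤ) : ℚ) := by
    simp only [Int.fract, sum_sub_distrib, mul_sum, Int.cast_sum]
  refine ⟨∑ i, ⌊q * x i⌋, ?_, ?_⟩
  · linarith [h q]
  · linarith [card_sub_sum_le_sum_fract_mul h hq]

theorem fract_mul_sum_sub_le {ι : Type*} [Fintype ι] [DecidableEq ι] {x : ι → ℚ}
    (h : ∀ n : ℤ, ∑ i, Int.fract (n * x i) ≤ ∑ i, x i) {n : ℤ}
    (hn : ∀ i, Int.fract (n * x i) ≠ 0) (R : Finset ι)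
    (hR : ∀ i ∉ R, Int.fract (n * x i) = x i) :
    Int.fract (n * ∑ i ∈ R, x i - (Fintype.card ι - ∑ i, x i - ∑ i ∈ Rᶜ, x i)) ≤
      2 * ∑ i, x i - Fintype.card ι := by
  set l := Fintype.card ι - ∑ i, x i - ∑ i ∈ Rᶜ, x i
  set u := ∑ i ∈ R, Int.fract (n * x i)
  have hsplit : ∑ i, Int.fract (n * x i) = u + ∑ i ∈ Rᶜ, x i := by
    rw [← sum_add_sum_compl R, sum_congr rfl fun i hi => hR i (mem_compl.1 hi)]
  have hlow := card_sub_sum_le_sum_fract_mul h hn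
  have hup := h n
  rw [hsplit] at hlow hup
  have hshift : Int.fract (n * ∑ i ∈ R, x i - l) = Int.fract (u - l) := by
    rw [Int.fract_eq_fract]
    refine ⟨∑ i ∈ R, ⌊n * x i⌋, ?_⟩
    simp only [u, Int.fract, sum_sub_distrib, Int.cast_sum, mul_sum]
    ring
  rw [hshift, ← Int.self_sub_floor]
  have : (0 : ℚ) ≤ ⌊u - l⌋ := by exact_mod_cast Int.floor_nonneg.2 (by linarith)
  linarith

theorem exists_mul_eq_intCast {x : Fin 4 → ℚ}
    (h : ∀ n : ℤ, ∑ i, Int.fract (n * x i) ≤ ∑ i, x i) (hS : ∑ i, x i ∈ Set.Ioo 2 (13 / 6))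
    {q : ℕ} (hq₂ : 2 ≤ q) (hq₅ : q ≤ 5) : ∃ i, ∃ z : ℤ, q * x i = z := by
  by_contra! hne
  have hfract : ∀ i, Int.fract (((q : ℤ) : ℚ) * x i) ≠ 0 := fun i hi => by
    obtain ⟨z, hz⟩ := Int.fract_eq_zero_iff.1 hi
    exact hne i z (by simpa using hz.symm)
  obtain ⟨m, hm₁, hm₂⟩ := exists_int_mem_Icc_of_forall_fract_mul_ne_zero h hfract
  simp only [Int.cast_natCast, Fintype.card_fin, Nat.cast_ofNat] at hm₁ hm₂
  have hq : (2 : ℚ) ≤ q := by exact_mod_cast hq₂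
  have hm : 2 * (q : ℤ) - 1 ≤ m := by
    have : ((2 * q - 2 : ℤ) : ℚ) < m := by push_cast; nlinarith [hS.1]
    have : 2 * (q : ℤ) - 2 < m := by exact_mod_cast this
    omega
  have : ((2 * q - 1 : ℤ) : ℚ) < (q + 1) * (13 / 6) - 4 := by
    calc ((2 * q - 1 : ℤ) : ℚ) ≤ m := by exact_mod_cast hm
      _ < (q + 1) * (13 / 6) - 4 := by nlinarith [hS.2]
  have : (5 : ℚ) < q := by push_cast at this; linarith
  exact absurd hq₅ (by exact_mod_cast this.not_ge)

theorem exists_ne_two_mul_eq_and_three_mul_eq {x : Fin 4 → ℚ} (hx : ∀ i, 0 < x i ∧ x i < 1)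
    (h : ∀ n : ℤ, ∑ i, Int.fract (n * x i) ≤ ∑ i, x i) (hS : ∑ i, x i ∈ Set.Ioo 2 (13 / 6)) :
    ∃ i₀ i₁, i₀ ≠ i₁ ∧ (∃ z : ℤ, 2 * x i₀ = z) ∧ ∃ z : ℤ, 3 * x i₁ = z := by
  obtain ⟨i₀, z₀, hz₀⟩ := exists_mul_eq_intCast h hS (q := 2) le_rfl (by norm_num)
  obtain ⟨i₁, z₁, hz₁⟩ := exists_mul_eq_intCast h hS (q := 3) (by norm_num) (by norm_num)
  push_cast at hz₀ hz₁
  refine ⟨i₀, i₁, ?_, ⟨z₀, hz₀⟩, ⟨z₁, hz₁⟩⟩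
  rintro rfl
  have hint : x i₀ = ((z₁ - z₀ : ℤ) : ℚ) := by push_cast; linarith
  have hfract := Int.fract_eq_self.2 ⟨(hx i₀).1.le, (hx i₀).2⟩
  rw [hint, Int.fract_intCast] at hfract
  linarith [(hx i₀).1]

theorem fract_one_add_six_mul_mul {y : ℚ} {z : ℤ} (hy : 6 * y = z) (k : ℕ) :
    Int.fract ((1 + 6 * k) * y) = Int.fract y := by
  rw [show (1 + 6 * (k : ℚ)) * y = y + ((k * z : ℤ) : ℚ) by push_cast; rw [← hy]; ring,
    Int.fract_add_intCast]

theorem sum_notMem_Ioo_of_sum_fract_mul_le {x : Fin 4 → ℚ} (hx : ∀ i, 0 < x i ∧ x i < 1)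
    (h : ∀ n : ℤ, ∑ i, Int.fract (n * x i) ≤ ∑ i, x i) : ∑ i, x i ∉ Set.Ioo 2 (13 / 6) := by
  intro hS
  have hfract : ∀ i, Int.fract (x i) = x i := fun i => Int.fract_eq_self.2 ⟨(hx i).1.le, (hx i).2⟩
  obtain ⟨i₀, i₁, h01, ⟨z₀, hz₀⟩, ⟨z₁, hz₁⟩⟩ := exists_ne_two_mul_eq_and_three_mul_eq hx h hS
  set R : Finset (Fin 4) := {i₀, i₁}ᶜ
  have hRc : ∀ i ∉ R, i = i₀ ∨ i = i₁ := fun i hi => by simp [R] at hi; tauto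
  have hsumRc : ∑ i ∈ Rᶜ, x i = x i₀ + x i₁ := by rw [compl_compl, sum_pair h01]
  have h6T : Int.fract (6 * ∑ i ∈ R, x i) ≠ 0 := by
    intro h6
    obtain ⟨z, hz⟩ := Int.fract_eq_zero_iff.1 h6
    have hint : 6 * ∑ i, x i = ((z + 3 * z₀ + 2 * z₁ : ℤ) : ℚ) := by
      rw [← sum_add_sum_compl R, hsumRc]; push_cast; linarith
    have h₁ : (12 : ℚ) < ((z + 3 * z₀ + 2 * z₁ : ℤ) : ℚ) := by linarith [hS.1]
    have h₂ : ((z + 3 * z₀ + 2 * z₁ : ℤ) : ℚ) < 13 := by linarith [hS.2]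
    norm_cast at h₁ h₂
    omega
  obtain ⟨k, hk, hlt⟩ := exists_forall_not_dvd_and_lt_fract R
    (by rw [card_compl, card_pair h01]; simp) (fun i => (x i).den)
    (fun i _ => Rat.two_le_den_of_fract_ne_zero (by rw [hfract]; exact (hx i).1.ne'))
    (∑ i ∈ R, x i) (4 - ∑ i, x i - ∑ i ∈ Rᶜ, x i) (2 * ∑ i, x i - 4) h6T (by linarith [hS.2])
  set n : ℤ := 1 + 6 * k
  have hn : (n : ℚ) = 1 + 6 * k := by push_cast [n]; ring
  have hfixed : ∀ i ∉ R, Int.fract (n * x i) = x i := by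
    intro i hi
    obtain rfl | rfl := hRc i hi
    · rw [hn, fract_one_add_six_mul_mul (z := 3 * z₀) (by push_cast; linarith), hfract]
    · rw [hn, fract_one_add_six_mul_mul (z := 2 * z₁) (by push_cast; linarith), hfract]
  have hne : ∀ i, Int.fract (n * x i) ≠ 0 := by
    intro i hzero
    by_cases hi : i ∈ R
    · obtain ⟨z, hz⟩ := Int.fract_eq_zero_iff.1 hzero
      have hdvd : ((x i).den : ℤ) ∣ 1 + 6 * k := Rat.den_dvd_of_intCast_mul_eq hz.symm
      exact hk i hi (by exact_mod_cast hdvd)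
    · linarith [hfixed i hi, (hx i).1]
  have := fract_mul_sum_sub_le h hne R hfixed
  rw [hn] at this
  simp only [Fintype.card_fin, Nat.cast_ofNat] at this
  linarith

theorem one_add_mul_sub_ceil (n : ℤ) (v : ℚ) :
    1 + n * v - ⌈n * v⌉ = 1 - Int.fract (n * (1 - v)) := by
  rw [show (n : ℚ) * (1 - v) = -(n * v) + n by ring, Int.fract_add_intCast, Int.fract,
    Int.floor_neg]
  push_cast
  ring

/-- If v₁,...,v₄ ∈ (0,1) are rationals and α_n := Σᵢ (1 + n vᵢ - ⌈n vᵢ⌉) satisfies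
α_n ≥ α_1 for all integers n, then α_1 ∉ (11/6, 2). -/
theorem stmt_4 (v : Fin 4 → ℚ) (hv : ∀ i, 0 < v i ∧ v i < 1)
    (α : ℤ → ℚ) (hα : ∀ n : ℤ, α n = ∑ i, (1 + (n : ℚ) * v i - (⌈(n : ℚ) * v i⌉ : ℚ)))
    (h : ∀ n : ℤ, α 1 ≤ α n) :
    ¬ (11 / 6 < α 1 ∧ α 1 < 2) := by
  set x : Fin 4 → ℚ := fun i => 1 - v i
  have hx : ∀ i, 0 < x i ∧ x i < 1 := fun i => ⟨by linarith [(hv i).2], by linarith [(hv i).1]⟩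
  have hαx : ∀ n : ℤ, α n = 4 - ∑ i, Int.fract (n * x i) := fun n => by
    simp [hα, one_add_mul_sub_ceil, x]
  have hα₁ : α 1 = 4 - ∑ i, x i := by
    simp only [hαx, Int.cast_one, one_mul, Int.fract_eq_self.2 ⟨(hx _).1.le, (hx _).2⟩]
  rintro ⟨h₁, h₂⟩
  refine sum_notMem_Ioo_of_sum_fract_mul_le hx (fun n => ?_) ⟨by linarith, by linarith⟩
  linarith [h n, hαx n]
end

section
/- For any positive integers k and m with 1 ≤ m ≤ 5, the minimal log discrepancy of the cyclic quotient singularity (1/(6k+m))(2k, 3k, m) equals (5k+m)/(6k+m). Equivalently, with r = 6k+m and weights (a₁,a₂,a₃) = (2k,3k,m): min over j ∈ {1,...,r-1} of Σ_{i=1}^{3} (1 + j·a_i/r - ⌈j·a_i/r⌉) equals (5k+m)/(6k+m). -/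
/-- residue function: n % r, with 0 replaced by r. -/
def Gres (r n : ℕ) : ℕ := if n % r = 0 then r else n % r

lemma Gres_modEq (r n : ℕ) : Gres r n ≡ n [MOD r] := by
  unfold Gres
  split
  · calc r ≡ 0 [MOD r] := (Nat.modEq_zero_iff_dvd).mpr dvd_rfl
      _ ≡ n [MOD r] := by rw [Nat.ModEq]; simp [*]
  · exact Nat.mod_modEq n r

lemma Gres_pos (r n : ℕ) (hr : 0 < r) : 1 ≤ Gres r n := by
  unfold Gres; split
  · omega
  · omega

lemma Gres_le (r n : ℕ) (hr : 0 < r) : Gres r n ≤ r := by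
  unfold Gres; split
  · omega
  · exact le_of_lt (Nat.mod_lt _ hr)

lemma key (k m j : ℕ) (hk : 0 < k) (hm1 : 1 ≤ m) (hm5 : m ≤ 5) :
    5 * k + m ≤ Gres (6 * k + m) (2 * k * j) + Gres (6 * k + m) (3 * k * j)
      + Gres (6 * k + m) (m * j) := by
  set r := 6 * k + m with hr
  have hrpos : 0 < r := by omega
  set A := Gres r (2 * k * j) with hA
  set B := Gres r (3 * k * j) with hB
  set C := Gres r (m * j) with hC
  have hApos := Gres_pos r (2 * k * j) hrpos
  have hBpos := Gres_pos r (3 * k * j) hrpos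
  have hCpos := Gres_pos r (m * j) hrpos
  have hAle := Gres_le r (2 * k * j) hrpos
  have hBle := Gres_le r (3 * k * j) hrpos
  have hCle := Gres_le r (m * j) hrpos
  -- 3A + C ≡ 0 mod r
  have h1 : r ∣ 3 * A + C := by
    have e1 : 3 * A + C ≡ 3 * (2 * k * j) + m * j [MOD r] :=
      Nat.ModEq.add ((Gres_modEq r (2 * k * j)).mul_left 3) (Gres_modEq r (m * j))
    have e2 : 3 * (2 * k * j) + m * j = r * j := by rw [hr]; ring
    have e3 : 3 * A + C ≡ 0 [MOD r] := by
      calc 3 * A + C ≡ r * j [MOD r] := by rw [← e2]; exact e1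
        _ ≡ 0 [MOD r] := (Nat.modEq_zero_iff_dvd).mpr ⟨j, rfl⟩
    exact (Nat.modEq_zero_iff_dvd).mp e3
  have h2 : r ∣ 2 * B + C := by
    have e1 : 2 * B + C ≡ 2 * (3 * k * j) + m * j [MOD r] :=
      Nat.ModEq.add ((Gres_modEq r (3 * k * j)).mul_left 2) (Gres_modEq r (m * j))
    have e2 : 2 * (3 * k * j) + m * j = r * j := by rw [hr]; ring
    have e3 : 2 * B + C ≡ 0 [MOD r] := by
      calc 2 * B + C ≡ r * j [MOD r] := by rw [← e2]; exact e1
        _ ≡ 0 [MOD r] := (Nat.modEq_zero_iff_dvd).mpr ⟨j, rfl⟩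
    exact (Nat.modEq_zero_iff_dvd).mp e3
  obtain ⟨d, hd⟩ := h1
  obtain ⟨e, he⟩ := h2
  have hd1 : 3 * A + C = r ∨ 2 * r ≤ 3 * A + C := by
    match d, hd with
    | 0, hd => omega
    | 1, hd => left; omega
    | (n+2), hd =>
      right
      have : r * 2 ≤ r * (n + 2) := Nat.mul_le_mul_left r (by omega)
      omega
  have he1 : 2 * B + C = r ∨ 2 * r ≤ 2 * B + C := by
    match e, he with
    | 0, he => omega
    | 1, he => left; omega
    | (n+2), he =>
      right
      have : r * 2 ≤ r * (n + 2) := Nat.mul_le_mul_left r (by omega)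
      omega
  rcases hd1 with hd1 | hd1 <;> rcases he1 with he1 | he1 <;> omega

lemma term_eq (n r : ℕ) (hr : 0 < r) :
    1 + (n : ℚ) / (r : ℚ) - (⌈(n : ℚ) / (r : ℚ)⌉ : ℚ)
      = ((Gres r n : ℕ) : ℚ) / (r : ℚ) := by
  have hrQ : (0 : ℚ) < (r : ℚ) := by exact_mod_cast hr
  have hmod := Nat.div_add_mod n r
  set q := n / r with hq
  set s := n % r with hs
  have hlt : s < r := Nat.mod_lt _ hr
  have hnQ : (n : ℚ) = (r : ℚ) * ((q : ℕ) : ℚ) + ((s : ℕ) : ℚ) := by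
    exact_mod_cast hmod.symm
  unfold Gres
  rw [← hs]
  by_cases h : s = 0
  · rw [h] at hnQ
    simp only [Nat.cast_zero, add_zero] at hnQ
    rw [if_pos h, hnQ, mul_div_cancel_left₀ _ (ne_of_gt hrQ), Int.ceil_natCast,
      div_self (ne_of_gt hrQ), Int.cast_natCast]
    ring
  · rw [if_neg h]
    have hceil : ⌈(n : ℚ) / (r : ℚ)⌉ = (q : ℕ) + 1 := by
      rw [Int.ceil_eq_iff]
      constructor
      · rw [lt_div_iff₀ hrQ, hnQ]
        have h0 : (0 : ℚ) < ((s : ℕ) : ℚ) := by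
          exact_mod_cast Nat.pos_of_ne_zero h
        push_cast
        nlinarith
      · rw [div_le_iff₀ hrQ, hnQ]
        have h0 : ((s : ℕ) : ℚ) ≤ (r : ℚ) := by
          exact_mod_cast le_of_lt hlt
        push_cast
        nlinarith
    rw [hceil, hnQ]
    push_cast
    field_simp
    ring

lemma sum_eq (k m j : ℕ) (hk : 0 < k) (hm1 : 1 ≤ m) :
    ∑ i : Fin 3, (1 + (j : ℚ) * ((![2 * k, 3 * k, m] i : ℕ) : ℚ) / ((6 * k + m : ℕ) : ℚ)
          - (⌈(j : ℚ) * ((![2 * k, 3 * k, m] i : ℕ) : ℚ) / ((6 * k + m : ℕ) : ℚ)⌉ : ℚ))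
      = ((Gres (6 * k + m) (2 * k * j) + Gres (6 * k + m) (3 * k * j)
          + Gres (6 * k + m) (m * j) : ℕ) : ℚ) / ((6 * k + m : ℕ) : ℚ) := by
  have hrpos : 0 < 6 * k + m := by omega
  have e1 : (j : ℚ) * ((2 * k : ℕ) : ℚ) = ((2 * k * j : ℕ) : ℚ) := by push_cast; ring
  have e2 : (j : ℚ) * ((3 * k : ℕ) : ℚ) = ((3 * k * j : ℕ) : ℚ) := by push_cast; ring
  have e3 : (j : ℚ) * ((m : ℕ) : ℚ) = ((m * j : ℕ) : ℚ) := by push_cast; ring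
  rw [Fin.sum_univ_three]
  simp only [Matrix.cons_val_zero, Matrix.cons_val_one, Matrix.head_cons,
    Matrix.cons_val_two, Matrix.tail_cons]
  rw [e1, e2, e3, term_eq _ _ hrpos, term_eq _ _ hrpos, term_eq _ _ hrpos]
  push_cast
  ring

/-- The mld of the cyclic quotient singularity (1/(6k+m))(2k,3k,m), computed as the
minimum over j ∈ {1,...,r-1} of Σᵢ (1 + j aᵢ/r - ⌈j aᵢ/r⌉), equals (5k+m)/(6k+m). -/
theorem stmt_5 (k m : ℕ) (hk : 0 < k) (hm1 : 1 ≤ m) (hm5 : m ≤ 5) :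
    IsLeast {x : ℚ | ∃ j : ℕ, 1 ≤ j ∧ j ≤ 6 * k + m - 1 ∧
        x = ∑ i : Fin 3, (1 + (j : ℚ) * ((![2 * k, 3 * k, m] i : ℕ) : ℚ) / ((6 * k + m : ℕ) : ℚ)
          - (⌈(j : ℚ) * ((![2 * k, 3 * k, m] i : ℕ) : ℚ) / ((6 * k + m : ℕ) : ℚ)⌉ : ℚ))}
      (((5 * k + m : ℕ) : ℚ) / ((6 * k + m : ℕ) : ℚ)) := by
  have hrpos : 0 < 6 * k + m := by omega
  have hrQ : (0 : ℚ) < ((6 * k + m : ℕ) : ℚ) := by exact_mod_cast hrpos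
  constructor
  · refine ⟨1, le_refl 1, by omega, ?_⟩
    rw [sum_eq k m 1 hk hm1]
    congr 1
    have g1 : Gres (6 * k + m) (2 * k * 1) = 2 * k := by
      unfold Gres
      rw [mul_one, Nat.mod_eq_of_lt (by omega)]
      simp only [if_neg (by omega : ¬ 2 * k = 0)]
    have g2 : Gres (6 * k + m) (3 * k * 1) = 3 * k := by
      unfold Gres
      rw [mul_one, Nat.mod_eq_of_lt (by omega)]
      simp only [if_neg (by omega : ¬ 3 * k = 0)]
    have g3 : Gres (6 * k + m) (m * 1) = m := by
      unfold Gres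
      rw [mul_one, Nat.mod_eq_of_lt (by omega)]
      simp only [if_neg (by omega : ¬ m = 0)]
    rw [g1, g2, g3]
    push_cast
    ring
  · rintro x ⟨j, hj1, hj2, rfl⟩
    rw [sum_eq k m j hk hm1]
    rw [div_le_div_iff_of_pos_right hrQ]
    exact_mod_cast key k m j hk hm1 hm5
end

section
/- Let r be a positive integer, and let a, b ∈ {1, ..., r-1} with 2b < r, gcd(b, r) = 1, gcd(b+1, r) = 1, and r > 66. Then there exists a positive integer c with c/r ∈ (1/6, 5/6) such that 1 - 3c/(2r) > {cb/r} > c/(2r), where {·} denotes fractional part. -/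
private lemma aux_low (m r k d e : ℤ) (hm9 : 9 ≤ m) (h12b : m ≤ 12 * k)
    (hde : m * d + e = 2 * (k * r)) (hem : e < m) (hr0 : 0 ≤ r) :
    r < 6 * (d + 1) := by
  nlinarith [mul_le_mul_of_nonneg_right h12b hr0]

private lemma aux_half (m r k d e : ℤ) (hm9 : 9 ≤ m) (hmr : m + 2 ≤ r)
    (h12a : 12 * k ≤ m + 11) (hde : m * d + e = 2 * (k * r)) (he0 : 0 ≤ e) :
    2 * (d + 1) < r := by
  nlinarith [mul_le_mul_of_nonneg_right h12a (by linarith : (0:ℤ) ≤ r),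
    mul_le_mul_of_nonneg_left hmr (by linarith : (0:ℤ) ≤ 8 * m - 44),
    mul_nonneg (by linarith : (0:ℤ) ≤ m) (by linarith : (0:ℤ) ≤ m - 9)]

private lemma aux_quad (m r : ℤ) (hm9 : 9 ≤ m) (hr : 67 ≤ r) (hmr : m + 2 ≤ r) :
    3 * m * m + 12 * m < (4 * m - 22) * r := by
  rcases le_or_gt m 60 with hsm | hsm
  · nlinarith [mul_le_mul_of_nonneg_left hr (by linarith : (0:ℤ) ≤ 4 * m - 22),
      mul_nonneg (by linarith : (0:ℤ) ≤ m - 9) (by linarith : (0:ℤ) ≤ 60 - m)]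
  · nlinarith [mul_le_mul_of_nonneg_left hmr (by linarith : (0:ℤ) ≤ 4 * m - 22)]

private lemma aux_up (m r k d e : ℤ) (hm9 : 9 ≤ m) (hr : 67 ≤ r) (hmr : m + 2 ≤ r)
    (h12a : 12 * k ≤ m + 11) (hde : m * d + e = 2 * (k * r)) (he0 : 0 ≤ e) (hem : e < m) :
    (d + 1) * (m + 4) < 2 * (k * r) + 2 * r := by
  have hm0 : (0:ℤ) < m := by linarith
  have H1 : 6 * (m * d) ≤ (m + 11) * r := by
    nlinarith [mul_le_mul_of_nonneg_right h12a (by linarith : (0:ℤ) ≤ r)]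
  have H2 := aux_quad m r hm9 hr hmr
  have H3 : 4 * d + m + 4 < e + 2 * r := by
    nlinarith [H1, H2, mul_nonneg (le_of_lt hm0) he0, hm0]
  nlinarith [H3, hde]

/-- Claim in the cA type (1.d) case: for r > 66 and suitable b there is c with
c/r ∈ (1/6, 5/6) and 1 - 3c/(2r) > {cb/r} > c/(2r). -/
theorem stmt_14 (r b : ℕ) (hr : 66 < r) (hb1 : 1 ≤ b) (hb2 : b ≤ r - 1)
    (h2b : 2 * b < r) (hg1 : Nat.gcd b r = 1) (hg2 : Nat.gcd (b + 1) r = 1) :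
    ∃ c : ℕ, 0 < c ∧ (1 : ℚ) / 6 < (c : ℚ) / (r : ℚ) ∧ (c : ℚ) / (r : ℚ) < 5 / 6 ∧
      Int.fract ((c : ℚ) * (b : ℚ) / (r : ℚ)) > (c : ℚ) / (2 * (r : ℚ)) ∧
      1 - 3 * (c : ℚ) / (2 * (r : ℚ)) > Int.fract ((c : ℚ) * (b : ℚ) / (r : ℚ)) := by
  -- First produce k, c with the key integer inequalities.
  obtain ⟨k, c, hc0, h6, h2c, hk1, hk2⟩ :
      ∃ k c : ℕ, 0 < c ∧ r < 6 * c ∧ 2 * c < r ∧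
        2 * (k * r) < c * (2 * b - 1) ∧ c * (2 * b + 3) < 2 * (k * r) + 2 * r := by
    by_cases hb5 : b ≤ 4
    · -- small b : take k = 0, c = ⌊r/6⌋ + 1
      refine ⟨0, r / 6 + 1, by omega, by omega, by omega, ?_, ?_⟩
      · have : 0 < (r / 6 + 1) * (2 * b - 1) := Nat.mul_pos (by omega) (by omega)
        omega
      · have h1 : (r / 6 + 1) * (2 * b + 3) ≤ (r / 6 + 1) * 11 :=
          Nat.mul_le_mul_left _ (by omega)
        omega
    · -- b ≥ 5 : k = ⌈(2b-1)/12⌉, c = ⌊2kr/(2b-1)⌋ + 1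
      push_neg at hb5
      obtain ⟨m, hm⟩ : ∃ m, 2 * b - 1 = m := ⟨_, rfl⟩
      obtain ⟨k, hk⟩ : ∃ k, (2 * b + 10) / 12 = k := ⟨_, rfl⟩
      have h12a : 12 * k ≤ m + 11 := by omega
      have h12b : m ≤ 12 * k := by omega
      have hm9 : 9 ≤ m := by omega
      have hmr : m + 2 ≤ r := by omega
      obtain ⟨d, e, hde, hem⟩ : ∃ d e, m * d + e = 2 * (k * r) ∧ e < m :=
        ⟨2 * (k * r) / m, 2 * (k * r) % m, Nat.div_add_mod _ _, Nat.mod_lt _ (by omega)⟩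
      have hmb3 : 2 * b + 3 = m + 4 := by omega
      have hrZ : (67:ℤ) ≤ (r:ℤ) := by exact_mod_cast (by omega : 67 ≤ r)
      have hm9Z : (9:ℤ) ≤ (m:ℤ) := by exact_mod_cast hm9
      have hmrZ : (m:ℤ) + 2 ≤ (r:ℤ) := by exact_mod_cast hmr
      have h12aZ : 12 * (k:ℤ) ≤ (m:ℤ) + 11 := by exact_mod_cast h12a
      have h12bZ : (m:ℤ) ≤ 12 * (k:ℤ) := by exact_mod_cast h12b
      have hdeZ : (m:ℤ) * d + e = 2 * ((k:ℤ) * r) := by exact_mod_cast hde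
      have hemZ : (e:ℤ) < (m:ℤ) := by exact_mod_cast hem
      refine ⟨k, d + 1, by omega, ?_, ?_, ?_, ?_⟩
      · -- r < 6 * (d + 1)
        zify
        have := aux_low (m:ℤ) r k d e hm9Z h12bZ hdeZ hemZ (by positivity)
        linarith
      · -- 2 * (d + 1) < r
        zify
        have := aux_half (m:ℤ) r k d e hm9Z hmrZ h12aZ hdeZ (by positivity)
        linarith
      · -- key lower bound
        rw [hm]
        have : 2 * (k * r) < m * (d + 1) := by
          have h : m * (d + 1) = m * d + m := by ring
          omega
        calc 2 * (k * r) < m * (d + 1) := this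
          _ = (d + 1) * m := by ring
      · -- key upper bound
        rw [hmb3]
        zify
        have := aux_up (m:ℤ) r k d e hm9Z hrZ hmrZ h12aZ hdeZ (by positivity) hemZ
        linarith
  -- Now derive the rational statement.
  have hr0 : (0:ℚ) < (r:ℚ) := by positivity
  have hmul : c * (2 * b - 1) + c = 2 * (c * b) := by
    have h1 : 2 * b - 1 + 1 = 2 * b := by omega
    calc c * (2 * b - 1) + c = c * (2 * b - 1 + 1) := by ring
      _ = 2 * (c * b) := by rw [h1]; ring
  have hmul2 : c * (2 * b + 3) = 2 * (c * b) + 3 * c := by ring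
  -- kr < cb < (k+1)r ; set s = cb - kr
  have hlow : k * r < c * b := by omega
  have hs : c * b = k * r + (c * b - k * r) := by omega
  set s : ℕ := c * b - k * r with hsdef
  have hs1 : c < 2 * s := by omega
  have hs2 : 2 * s + 3 * c < 2 * r := by omega
  have hsr : s < r := by omega
  have hfract : Int.fract ((c : ℚ) * (b : ℚ) / (r : ℚ)) = (s : ℚ) / (r : ℚ) := by
    have hcb : (c : ℚ) * (b : ℚ) = (k : ℚ) * (r : ℚ) + (s : ℚ) := by
      exact_mod_cast congrArg (Nat.cast : ℕ → ℚ) hs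
    have h2 : (c : ℚ) * (b : ℚ) / (r : ℚ) = ((k : ℤ) : ℚ) + (s : ℚ) / (r : ℚ) := by
      rw [hcb]; push_cast; field_simp
    rw [h2, Int.fract_intCast_add, Int.fract_eq_self.mpr]
    constructor
    · positivity
    · rw [div_lt_one hr0]; exact_mod_cast hsr
  refine ⟨c, hc0, ?_, ?_, ?_, ?_⟩
  · rw [div_lt_div_iff₀ (by norm_num) hr0]
    have : (r:ℚ) < 6 * c := by exact_mod_cast h6
    linarith
  · rw [div_lt_div_iff₀ hr0 (by norm_num)]
    have : 2 * (c:ℚ) < r := by exact_mod_cast h2c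
    linarith
  · rw [hfract, gt_iff_lt, div_lt_div_iff₀ (by positivity) hr0]
    have : (c:ℚ) < 2 * s := by exact_mod_cast hs1
    nlinarith
  · rw [hfract, gt_iff_lt, show (1:ℚ) - 3 * (c:ℚ) / (2 * (r:ℚ)) = (2*(r:ℚ) - 3*c) / (2*(r:ℚ)) by
      field_simp, div_lt_div_iff₀ hr0 (by positivity)]
    have : 2 * (s:ℚ) + 3 * c < 2 * r := by exact_mod_cast hs2
    nlinarith
end

section
/- Let r ≥ 7 be an integer and v₁,...,v₅ ∈ (0,1) rationals with denominators dividing r such that Σ v_i < 2 and for every integer n with r ∤ n, Σ_{i=1}^{5} {n v_i} ≥ Σ_{i=1}^5 v_i, where {·} is fractional part. Then for any integer n with 2 ≤ n ≤ 5 and such that no v_i has n v_i ∈ ℤ, one has Σ_{i=1}^5 ⌊n v_i⌋ = 2n - 3. (Special case of Claim 'claim for equations' with ε implicit.) -/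
/-- Special case of Claim 3.7: if v₁,...,v₅ ∈ (0,1) have denominators dividing r ≥ 7,
11/6 < Σ vᵢ < 2, and Σ {n vᵢ} ≥ Σ vᵢ for all n not divisible by r, then for
2 ≤ n ≤ 5 with no n vᵢ an integer, Σ ⌊n vᵢ⌋ = 2n - 3. -/
theorem stmt_19 (r : ℕ) (hr : 7 ≤ r) (v : Fin 5 → ℚ)
    (hv : ∀ i, 0 < v i ∧ v i < 1)
    (hden : ∀ i, ∃ a : ℤ, v i = (a : ℚ) / (r : ℚ))
    (hlt : ∑ i, v i < 2) (hgt : 11 / 6 < ∑ i, v i)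
    (hmld : ∀ n : ℤ, ¬ (r : ℤ) ∣ n → ∑ i, v i ≤ ∑ i, Int.fract ((n : ℚ) * v i)) :
    ∀ n : ℤ, 2 ≤ n → n ≤ 5 → (∀ i, Int.fract ((n : ℚ) * v i) ≠ 0) →
      ∑ i, ⌊(n : ℚ) * v i⌋ = 2 * n - 3 := by
  intro n hn2 hn5 hfr
  have hrn : ¬ (r : ℤ) ∣ n := by
    intro h
    have := Int.le_of_dvd (by omega) h
    omega
  have hrn' : ¬ (r : ℤ) ∣ (-n) := fun h => hrn (dvd_neg.mp h)
  have h1 := hmld n hrn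
  have h2 := hmld (-n) hrn'
  set S := ∑ i, v i with hS
  set F := ∑ i, Int.fract ((n : ℚ) * v i) with hF
  have h2' : S ≤ 5 - F := by
    have heq : ∀ i ∈ Finset.univ, Int.fract (((-n : ℤ) : ℚ) * v i)
        = 1 - Int.fract ((n : ℚ) * v i) := by
      intro i _
      push_cast
      rw [neg_mul, Int.fract_neg (hfr i)]
    rw [Finset.sum_congr rfl heq, Finset.sum_sub_distrib] at h2
    simpa using h2
  have hfl : ((∑ i, ⌊(n : ℚ) * v i⌋ : ℤ) : ℚ) = (n : ℚ) * S - F := by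
    push_cast
    rw [hS, hF, Finset.mul_sum, ← Finset.sum_sub_distrib]
    exact Finset.sum_congr rfl (fun i _ => (Int.self_sub_fract _).symm)
  have hn2' : (2 : ℚ) ≤ (n : ℚ) := by exact_mod_cast hn2
  have hn5' : (n : ℚ) ≤ 5 := by exact_mod_cast hn5
  have hub : ((∑ i, ⌊(n : ℚ) * v i⌋ : ℤ) : ℚ) < 2 * (n : ℚ) - 2 := by
    rw [hfl]
    nlinarith [mul_pos (show (0:ℚ) < (n:ℚ) - 1 by linarith) (show (0:ℚ) < 2 - S by linarith)]
  have hlb : 2 * (n : ℚ) - 4 < ((∑ i, ⌊(n : ℚ) * v i⌋ : ℤ) : ℚ) := by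
    rw [hfl]
    nlinarith [mul_pos (show (0:ℚ) < (n:ℚ) + 1 by linarith) (show (0:ℚ) < S - 11/6 by linarith)]
  have hub' : (∑ i, ⌊(n : ℚ) * v i⌋ : ℤ) < 2 * n - 2 := by exact_mod_cast hub
  have hlb' : 2 * n - 4 < (∑ i, ⌊(n : ℚ) * v i⌋ : ℤ) := by exact_mod_cast hlb
  omega
end
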